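/- For every n ≥ 2 there exists an n × n 0-1 matrix M with st(M) ≤ n − 1; i.e., st(n) ≤ n − 1 for n ≥ 2. -/

import Mathlib

/-! Take `a = ⌊(n - 1) / 2⌋` and put ones on the triangle `i + j ≤ a` and on the square
`i, j > a`, zeros elsewhere. The coordinate sum `i + j` strictly increases along a staircase, so a
staircase meets each antidiagonal at most once. The zeros lie on the `n - 1` antidiagonals
`a + 1, …, a + n - 1`. A staircase of ones never passes between the triangle and the square, and
these meet `a + 1` and `2n - 2a - 3` antidiagonals respectively, both at most `n - 1`. -/

/-- A step of a staircase: the next position is strictly to the right in the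
same row, or strictly below in the same column. -/
def Step {n N : ℕ} (p q : Fin n × Fin N) : Prop :=
  (p.1 = q.1 ∧ p.2 < q.2) ∨ (p.2 = q.2 ∧ p.1 < q.1)

/-- A `v`-staircase in the 0-1 matrix `M`: a sequence of positions all holding
the value `v`, each successive one strictly to the right in the same row or
strictly below in the same column of the previous one. -/
def IsStaircase {n N : ℕ} (M : Fin n → Fin N → Fin 2) (v : Fin 2)
    (L : List (Fin n × Fin N)) : Prop :=
  (∀ p ∈ L, M p.1 p.2 = v) ∧ L.Chain' Step

lemma List.IsChain.pred_iff_of_rel {α : Type*} {R : α → α → Prop} {P : α → Prop} {L : List α}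
    (hL : L.IsChain R) (hP : ∀ x ∈ L, ∀ y ∈ L, R x y → (P x ↔ P y))
    {x y : α} (hx : x ∈ L) (hy : y ∈ L) : P x ↔ P y := by
  have iff_head : ∀ z ∈ L, P z ↔ P (L.head (List.ne_nil_of_mem hx)) :=
    (List.IsChain.iff_mem.mp hL).induction _ _
      (fun _ _ ⟨ha, hb, hab⟩ h => (hP _ ha _ hb hab).symm.trans h) (fun _ => Iff.rfl)
  exact (iff_head x hx).trans (iff_head y hy).symm

section Staircase

variable {n N : ℕ}

lemma Step.val_add_lt {p q : Fin n × Fin N} (h : Step p q) :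
    (p.1 : ℕ) + p.2 < q.1 + q.2 := by
  rcases h with ⟨h₁, h₂⟩ | ⟨h₁, h₂⟩
  · rw [h₁]; exact Nat.add_lt_add_left h₂ _
  · rw [h₁]; exact Nat.add_lt_add_right h₂ _

lemma List.IsChain.length_le_of_val_add_mem {L : List (Fin n × Fin N)} (hL : L.IsChain Step)
    {lo hi : ℕ} (hm : ∀ p ∈ L, lo ≤ (p.1 : ℕ) + p.2 ∧ (p.1 : ℕ) + p.2 ≤ hi) :
    L.length ≤ hi + 1 - lo := by
  set sums := L.map fun p => (p.1 : ℕ) + p.2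
  have sums_nodup : sums.Nodup :=
    (List.isChain_iff_pairwise.mp
      (List.isChain_map_of_isChain _ (fun _ _ h => h.val_add_lt) hL)).imp ne_of_lt
  have sums_sub : sums ⊆ List.range' lo (hi + 1 - lo) := by
    intro s hs
    obtain ⟨p, hp, rfl⟩ := List.mem_map.mp hs
    have := hm p hp
    rw [List.mem_range'_1]
    omega
  simpa [sums] using (sums_nodup.subperm sums_sub).length_le

end Staircase

def cornerMatrix (a n : ℕ) : Fin n → Fin n → Fin 2 :=
  fun i j => if (i : ℕ) + j ≤ a ∨ (a < i ∧ a < j) then 1 else 0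

section CornerMatrix

variable {a n : ℕ}

lemma cornerMatrix_eq_one_iff {i j : Fin n} :
    cornerMatrix a n i j = 1 ↔ (i : ℕ) + j ≤ a ∨ (a < i ∧ a < j) := by
  unfold cornerMatrix
  split_ifs <;> simp_all

lemma cornerMatrix_eq_zero_iff {i j : Fin n} :
    cornerMatrix a n i j = 0 ↔ a < (i : ℕ) + j ∧ (i ≤ a ∨ j ≤ a) := by
  unfold cornerMatrix
  split_ifs <;> simp_all <;> omega

lemma length_le_of_isStaircase_cornerMatrix_zero {L : List (Fin n × Fin n)}
    (hL : IsStaircase (cornerMatrix a n) 0 L) : L.length ≤ n - 1 := by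
  have hm : ∀ p ∈ L, a + 1 ≤ (p.1 : ℕ) + p.2 ∧ (p.1 : ℕ) + p.2 ≤ a + (n - 1) := by
    intro p hp
    have := cornerMatrix_eq_zero_iff.mp (hL.1 p hp)
    omega
  have := hL.2.length_le_of_val_add_mem hm
  omega

/-- A step keeps a coordinate, which is `≤ a` in the triangle and `> a` in the square. -/
lemma Step.inSquare_iff {p q : Fin n × Fin n} (h : Step p q)
    (hp : cornerMatrix a n p.1 p.2 = 1) (hq : cornerMatrix a n q.1 q.2 = 1) :
    (a < (p.1 : ℕ) ∧ a < (p.2 : ℕ)) ↔ (a < (q.1 : ℕ) ∧ a < (q.2 : ℕ)) := by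
  rw [cornerMatrix_eq_one_iff] at hp hq
  rcases h with ⟨h₁, h₂⟩ | ⟨h₁, h₂⟩ <;> rw [h₁] at hp ⊢ <;> omega

lemma length_le_of_isStaircase_cornerMatrix_one {L : List (Fin n × Fin n)}
    (hL : IsStaircase (cornerMatrix a n) 1 L) : L.length ≤ max (a + 1) (2 * n - 2 * a - 3) := by
  by_cases hS : ∃ q ∈ L, a < (q.1 : ℕ) ∧ a < (q.2 : ℕ)
  · obtain ⟨q, hqL, hq⟩ := hS
    have inSquare : ∀ p ∈ L, a < (p.1 : ℕ) ∧ a < (p.2 : ℕ) := fun p hp =>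
      (hL.2.pred_iff_of_rel (P := fun p : Fin n × Fin n => a < (p.1 : ℕ) ∧ a < (p.2 : ℕ))
        (fun x hx y hy hxy => hxy.inSquare_iff (hL.1 x hx) (hL.1 y hy)) hqL hp).mp hq
    have := hL.2.length_le_of_val_add_mem (lo := 2 * a + 2) (hi := 2 * n - 2) fun p hp => by
      have := inSquare p hp
      omega
    omega
  · push Not at hS
    have := hL.2.length_le_of_val_add_mem (lo := 0) (hi := a) fun p hp => by
      have := cornerMatrix_eq_one_iff.mp (hL.1 p hp)
      have := hS p hp
      omega
    omega

end CornerMatrix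

/-- For every n ≥ 2 there is an n × n 0-1 matrix in which every homogeneous
staircase has length at most n − 1; i.e. st(n) ≤ n − 1. -/
theorem stmt12 (n : ℕ) (hn : 2 ≤ n) :
    ∃ M : Fin n → Fin n → Fin 2,
      ∀ (v : Fin 2) (L : List (Fin n × Fin n)),
        IsStaircase M v L → L.length ≤ n - 1 := by
  refine ⟨cornerMatrix ((n - 1) / 2) n, fun v L hL => ?_⟩
  fin_cases v
  · exact length_le_of_isStaircase_cornerMatrix_zero hL
  · have := length_le_of_isStaircase_cornerMatrix_one hL
    omega
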